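/- arXiv:2005.13921 — 2 statements merged into one kernel-verified Lean document; each statement's English description precedes it below -/
import Mathlib

section
/- Let G be a finite two-player game with rational payoffs that is trivial for Player 1. If s₂ is a computable strategy of Player 2 in the infinitely repeated game with limit-of-means payoff, then s₂ has a computable best response. -/
open Filter

/-- The finite history of the first `t` stages induced by a strategy profile. -/
def hist {A1 A2 : Type} (s1 : List (A1 × A2) → A1) (s2 : List (A1 × A2) → A2) :
    ℕ → List (A1 × A2)
  | 0 => []
  | t + 1 => hist s1 s2 t ++ [(s1 (hist s1 s2 t), s2 (hist s1 s2 t))]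

/-- The action profile played at stage `t + 1` (0-indexed `t`) along the path of
play induced by a strategy profile. -/
def play {A1 A2 : Type} (s1 : List (A1 × A2) → A1) (s2 : List (A1 × A2) → A2)
    (t : ℕ) : A1 × A2 :=
  (s1 (hist s1 s2 t), s2 (hist s1 s2 t))

/-- Player 1's limit-of-means payoff of a strategy profile:
`liminf_{T→∞} (1/T) Σ_{t=1}^T u₁(h[t])` along the induced path of play. -/
noncomputable def lom {A1 A2 : Type} (u1 : A1 × A2 → ℚ)
    (s1 : List (A1 × A2) → A1) (s2 : List (A1 × A2) → A2) : ℝ :=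
  liminf (fun T : ℕ => (∑ t ∈ Finset.range T, (u1 (play s1 s2 t) : ℝ)) / T) atTop

/-! Triviality says that every action of Player 2 has a reply attaining Player 1's overall
maximum payoff `M`. Answering each action of `s₂` with such a reply is computable (a finite
lookup table composed with `s₂`) and earns `M` at every stage, while no strategy can average
more than `M`. -/

open Finset Topology

section Cesaro

variable {x : ℕ → ℝ} {m M : ℝ}

lemma cesaro_mean_le (hM : ∀ t, x t ≤ M) {T : ℕ} (hT : 0 < T) :
    (∑ t ∈ range T, x t) / T ≤ M := by
  rw [div_le_iff₀ (by exact_mod_cast hT)]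
  simpa [mul_comm] using sum_le_card_nsmul (range T) x M fun t _ => hM t

lemma le_cesaro_mean (hm : ∀ t, m ≤ x t) {T : ℕ} (hT : 0 < T) :
    m ≤ (∑ t ∈ range T, x t) / T := by
  rw [le_div_iff₀ (by exact_mod_cast hT)]
  simpa [mul_comm] using card_nsmul_le_sum (range T) x m fun t _ => hm t

lemma liminf_cesaro_mean_le (hm : ∀ t, m ≤ x t) (hM : ∀ t, x t ≤ M) :
    liminf (fun T : ℕ => (∑ t ∈ range T, x t) / T) atTop ≤ M := by
  refine liminf_le_of_frequently_le ?_ (isBoundedUnder_of_eventually_ge (a := m) ?_)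
  · exact (eventually_gt_atTop 0 |>.mono fun T hT => cesaro_mean_le hM hT).frequently
  · exact eventually_gt_atTop 0 |>.mono fun T hT => le_cesaro_mean hm hT

lemma liminf_cesaro_mean_of_forall_eq (hx : ∀ t, x t = M) :
    liminf (fun T : ℕ => (∑ t ∈ range T, x t) / T) atTop = M := by
  have hconst : Tendsto x atTop (𝓝 M) := by
    rw [show x = fun _ => M from funext hx]
    exact tendsto_const_nhds
  simpa [div_eq_inv_mul] using hconst.cesaro.liminf_eq

end Cesaro

section RepeatedGame

variable {A1 A2 : Type} (u1 : A1 × A2 → ℚ) (s1 : List (A1 × A2) → A1)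
  (s2 : List (A1 × A2) → A2) {c : ℚ}

lemma lom_le_of_forall_le [Finite A1] [Finite A2] (hc : ∀ a, u1 a ≤ c) :
    lom u1 s1 s2 ≤ c := by
  obtain ⟨m, hm⟩ := (Set.finite_range u1).bddBelow
  refine liminf_cesaro_mean_le (m := m) (fun t => ?_) fun t => ?_
  · exact_mod_cast hm (Set.mem_range_self _)
  · exact_mod_cast hc _

lemma lom_eq_of_forall_play_eq (h : ∀ t, u1 (play s1 s2 t) = c) : lom u1 s1 s2 = c :=
  liminf_cesaro_mean_of_forall_eq fun t => by exact_mod_cast h t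

end RepeatedGame

lemma exists_apply_eq_sup'_of_sup'_eq_inf'_sup' {α β γ : Type*} [Fintype α] [Fintype β]
    [Nonempty α] [Nonempty β] [LinearOrder γ] (u : α × β → γ)
    (h : univ.sup' univ_nonempty u =
      univ.inf' univ_nonempty (fun b : β => univ.sup' univ_nonempty (fun a : α => u (a, b))))
    (b : β) : ∃ a, u (a, b) = univ.sup' univ_nonempty u := by
  obtain ⟨a, -, ha⟩ := exists_mem_eq_sup' univ_nonempty fun a : α => u (a, b)
  refine ⟨a, le_antisymm (le_sup' u (mem_univ _)) ?_⟩
  calc univ.sup' univ_nonempty u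
      ≤ univ.sup' univ_nonempty (fun a : α => u (a, b)) := h ▸ inf'_le _ (mem_univ b)
    _ = u (a, b) := ha

/-- If `G` is trivial for Player 1, then every computable strategy of Player 2
in the infinitely repeated game with limit-of-means payoff has a computable best
response. -/
theorem trivial_game_computable_strategy_has_computable_best_response
    {A1 A2 : Type} [Fintype A1] [Fintype A2] [Nonempty A1] [Nonempty A2]
    [Primcodable A1] [Primcodable A2]
    (u1 : A1 × A2 → ℚ) (M1 : ℚ)
    (hM1 : M1 = Finset.univ.sup' Finset.univ_nonempty u1)
    (htrivial : M1 = Finset.univ.inf' Finset.univ_nonempty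
      (fun a2 : A2 => Finset.univ.sup' Finset.univ_nonempty (fun a1 : A1 => u1 (a1, a2))))
    (s2 : List (A1 × A2) → A2) (hs2 : Computable s2) :
    ∃ s1 : List (A1 × A2) → A1,
      Computable s1 ∧
      ∀ s1' : List (A1 × A2) → A1, lom u1 s1' s2 ≤ lom u1 s1 s2 := by
  subst hM1
  choose reply hreply using exists_apply_eq_sup'_of_sup'_eq_inf'_sup' u1 htrivial
  refine ⟨reply ∘ s2, (Primrec.dom_finite reply).to_comp.comp hs2, fun s1' => ?_⟩
  rw [lom_eq_of_forall_play_eq u1 (reply ∘ s2) s2 fun t => hreply _]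
  exact lom_le_of_forall_le u1 s1' s2 fun a => le_sup' u1 (mem_univ a)
end

section
/- Let G be a finite two-player game non-trivial for Player 1, and let t ∈ ℕ. Let s₁ be a strategy for Player 1 against σ₂ᵈ whose first play of C₁ occurs at stage t. Then Player 1's limit-of-means payoff satisfies υ₁(s₁, σ₂ᵈ) ≤ (M₁(D₂) + t·M₁)/(t+1), and the strategy that first plays C₁ at stage t+1 and afterwards plays D₁ exactly when t+2 divides the current stage and C₁ otherwise achieves limit-of-means payoff exactly (M₁(D₂) + (t+1)·M₁)/(t+2), which is strictly larger since M₁(D₂) < M₁. -/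
open Filter

/-- Player 2's strategy `σ₂ᵈ`: play `D₂` while Player 1 has never played `C₁`;
once Player 1 first played `C₁` at (1-indexed) stage `t₀ + 1`, play `D₂` in
stage `T + 1` iff `(t₀ + 2) ∣ (T + 1)`, and `C₂` otherwise. -/
def sigma2d {A1 A2 : Type} [DecidableEq A1] (C1 : A1) (C2 D2 : A2)
    (h : List (A1 × A2)) : A2 :=
  match h.findIdx? (fun p => decide (p.1 = C1)) with
  | none => D2
  | some t0 => if (t0 + 2) ∣ (h.length + 1) then D2 else C2

/-- Player 1's improved strategy: play a filler action `E₁ ≠ C₁` during the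
first `t` stages, play `C₁` for the first time at stage `t + 1`, and afterwards
play `D₁` exactly at stages divisible by `t + 2` and `C₁` otherwise. -/
def s1improved {A1 A2 : Type} (C1 D1 E1 : A1) (t : ℕ) (h : List (A1 × A2)) : A1 :=
  if h.length + 1 ≤ t then E1
  else if h.length + 1 = t + 1 then C1
  else if (t + 2) ∣ (h.length + 1) then D1 else C1

/-!
Once Player 1 first plays `C₁` at (0-indexed) stage `n`, `σ₂ᵈ` plays `D₂` exactly at the stages
`T` with `n + 2 ∣ T + 1`, so Player 1's payoff is bounded by the `(n + 2)`-periodic sequence equal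
to `M₁(D₂)` at those stages and to `M₁` elsewhere. Since `⌊N / d⌋ / N → 1 / d`, the running means
of that sequence converge to `(M₁(D₂) + (n + 1) M₁) / (n + 2)`, which bounds the liminf. The
improved strategy, first cooperating at stage `t`, realises this periodic sequence exactly (with
`n = t`) from stage `t + 1` on, and changing finitely many terms does not alter a Cesàro limit.
-/

open Topology Finset

noncomputable def runningMean (f : ℕ → ℝ) (N : ℕ) : ℝ := (∑ t ∈ range N, f t) / N

lemma runningMean_mono {f g : ℕ → ℝ} (hfg : ∀ t, f t ≤ g t) (N : ℕ) :
    runningMean f N ≤ runningMean g N :=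
  div_le_div_of_nonneg_right (sum_le_sum fun t _ => hfg t) N.cast_nonneg

lemma tendsto_runningMean_congr {f g : ℕ → ℝ} {l : ℝ} (hfg : f =ᶠ[atTop] g)
    (hg : Tendsto (runningMean g) atTop (𝓝 l)) : Tendsto (runningMean f) atTop (𝓝 l) := by
  have hdiff : Tendsto (runningMean (f - g)) atTop (𝓝 0) := by
    have h0 : Tendsto (f - g) atTop (𝓝 0) :=
      tendsto_const_nhds.congr' (hfg.mono fun t ht => by simp [ht])
    exact h0.cesaro.congr fun N => (div_eq_inv_mul _ _).symm
  have hsplit : runningMean f = runningMean (f - g) + runningMean g := by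
    ext N
    simp only [runningMean, Pi.add_apply, Pi.sub_apply, sum_sub_distrib]
    ring
  rw [hsplit, ← zero_add l]
  exact hdiff.add hg

lemma tendsto_natCast_div_div_atTop (d : ℕ) :
    Tendsto (fun N : ℕ => ((N / d : ℕ) : ℝ) / N) atTop (𝓝 (1 / d)) := by
  rcases Nat.eq_zero_or_pos d with rfl | hd
  · simp
  have hfloor : Tendsto (fun N : ℕ => (⌊(N : ℝ) / d⌋₊ : ℝ) / ((N : ℝ) / d)) atTop (𝓝 1) :=
    tendsto_nat_floor_div_atTop.comp
      (tendsto_natCast_atTop_atTop.atTop_div_const (by positivity))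
  convert hfloor.div_const (d : ℝ) using 1
  · ext N
    rw [Nat.floor_div_eq_div]
    field_simp

lemma runningMean_ite_dvd (d : ℕ) (x y : ℝ) {N : ℕ} (hN : N ≠ 0) :
    runningMean (fun t => if d ∣ t + 1 then x else y) N
      = y + (x - y) * (((N / d : ℕ) : ℝ) / N) := by
  have hcount : ∑ t ∈ range N, (if d ∣ t + 1 then x - y else 0) = (N / d : ℕ) * (x - y) := by
    rw [sum_ite, sum_const_zero, add_zero, sum_const, Nat.card_multiples, nsmul_eq_mul]
  have hsum : ∑ t ∈ range N, (if d ∣ t + 1 then x else y)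
      = ∑ t ∈ range N, (y + if d ∣ t + 1 then x - y else 0) :=
    sum_congr rfl fun t _ => by split_ifs <;> ring
  rw [runningMean, hsum, sum_add_distrib, hcount, sum_const, card_range, nsmul_eq_mul]
  field_simp

lemma tendsto_runningMean_ite_dvd (d : ℕ) (x y : ℝ) :
    Tendsto (runningMean fun t => if d + 1 ∣ t + 1 then x else y) atTop
      (𝓝 ((x + d * y) / (d + 1))) := by
  have hlim := (tendsto_natCast_div_div_atTop (d + 1)).const_mul (x - y) |>.const_add y
  have hval : y + (x - y) * (1 / ((d + 1 : ℕ) : ℝ)) = (x + d * y) / (d + 1) := by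
    push_cast
    field_simp
    ring
  rw [hval] at hlim
  exact hlim.congr' <| (eventually_ne_atTop 0).mono fun N hN =>
    (runningMean_ite_dvd (d + 1) x y hN).symm

lemma runningMean_const (c : ℝ) {N : ℕ} (hN : N ≠ 0) : runningMean (fun _ => c) N = c := by
  simp [runningMean, hN]

lemma isBoundedUnder_ge_runningMean {f : ℕ → ℝ} {m : ℝ} (hf : ∀ t, m ≤ f t) :
    IsBoundedUnder (· ≥ ·) atTop (runningMean f) :=
  isBoundedUnder_of_eventually_ge <| (eventually_ne_atTop 0).mono fun N hN =>
    runningMean_const m hN ▸ runningMean_mono hf N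

section Play

variable {A1 A2 : Type}

lemma hist_eq_map (s1 : List (A1 × A2) → A1) (s2 : List (A1 × A2) → A2) :
    ∀ T, hist s1 s2 T = (List.range T).map (play s1 s2)
  | 0 => rfl
  | T + 1 => by
    rw [List.range_succ, List.map_append, ← hist_eq_map s1 s2 T]
    rfl

@[simp]
lemma length_hist (s1 : List (A1 × A2) → A1) (s2 : List (A1 × A2) → A2) (T : ℕ) :
    (hist s1 s2 T).length = T := by
  simp [hist_eq_map]

lemma lom_eq_liminf_runningMean (u1 : A1 × A2 → ℚ) (s1 : List (A1 × A2) → A1)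
    (s2 : List (A1 × A2) → A2) :
    lom u1 s1 s2 = liminf (runningMean fun t => (u1 (play s1 s2 t) : ℝ)) atTop :=
  rfl

lemma play_fst_s1improved (C1 D1 E1 : A1) (t : ℕ) (s2 : List (A1 × A2) → A2) (T : ℕ) :
    (play (s1improved C1 D1 E1 t) s2 T).1
      = if T < t then E1 else if T = t then C1 else if t + 2 ∣ T + 1 then D1 else C1 := by
  simp only [play, s1improved, length_hist]
  grind

variable [DecidableEq A1] {s1 : List (A1 × A2) → A1} {s2 : List (A1 × A2) → A2}
  {C1 : A1} {n T : ℕ}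

lemma findIdx?_hist_eq_some (hbefore : ∀ t < n, (play s1 s2 t).1 ≠ C1)
    (hfirst : (play s1 s2 n).1 = C1) (hT : n < T) :
    (hist s1 s2 T).findIdx? (fun p => decide (p.1 = C1)) = some n := by
  rw [List.findIdx?_eq_some_iff_getElem]
  refine ⟨by simpa using hT, by simpa [hist_eq_map] using hfirst, fun t ht => ?_⟩
  simpa [hist_eq_map] using hbefore t ht

variable {C2 D2 : A2}

lemma play_snd_sigma2d_of_lt (hbefore : ∀ t < n, (play s1 (sigma2d C1 C2 D2) t).1 ≠ C1)
    (hfirst : (play s1 (sigma2d C1 C2 D2) n).1 = C1) (hT : n < T) :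
    (play s1 (sigma2d C1 C2 D2) T).2 = if n + 2 ∣ T + 1 then D2 else C2 := by
  simp [play, sigma2d, findIdx?_hist_eq_some hbefore hfirst hT]

end Play

section Payoff

variable {A1 A2 : Type} [DecidableEq A1] (u1 : A1 × A2 → ℚ) {C1 : A1} {C2 D2 : A2}

theorem lom_sigma2d_le [Finite A1] [Finite A2] {s1 : List (A1 × A2) → A1} {n : ℕ} {M MD : ℚ}
    (hM : ∀ a, u1 a ≤ M) (hMD : ∀ a1, u1 (a1, D2) ≤ MD)
    (hbefore : ∀ t < n, (play s1 (sigma2d C1 C2 D2) t).1 ≠ C1)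
    (hfirst : (play s1 (sigma2d C1 C2 D2) n).1 = C1) :
    lom u1 s1 (sigma2d C1 C2 D2) ≤ ((MD : ℝ) + (n + 1) * M) / (n + 2) := by
  set p := play s1 (sigma2d C1 C2 D2)
  have hpay : ∀ T, (u1 (p T) : ℝ) ≤ if n + 1 + 1 ∣ T + 1 then (MD : ℝ) else M := by
    intro T
    split_ifs with hdvd
    · have hT : n < T := by have := Nat.le_of_dvd T.succ_pos hdvd; omega
      have hsnd : (p T).2 = D2 := by
        rw [play_snd_sigma2d_of_lt hbefore hfirst hT, if_pos hdvd]
      rw [← Prod.mk.eta (p := p T), hsnd]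
      exact_mod_cast hMD _
    · exact_mod_cast hM _
  obtain ⟨m, hm⟩ := (Set.finite_range u1).bddBelow
  have hbdd := isBoundedUnder_ge_runningMean (f := fun T => (u1 (p T) : ℝ)) (m := m)
    fun T => by exact_mod_cast hm ⟨p T, rfl⟩
  have hlim := tendsto_runningMean_ite_dvd (n + 1) (MD : ℝ) M
  calc lom u1 s1 (sigma2d C1 C2 D2)
      = liminf (runningMean fun T => (u1 (p T) : ℝ)) atTop := lom_eq_liminf_runningMean ..
    _ ≤ liminf (runningMean fun T => if n + 1 + 1 ∣ T + 1 then (MD : ℝ) else M) atTop :=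
        liminf_le_liminf (.of_forall (runningMean_mono hpay)) hbdd hlim.isCoboundedUnder_ge
    _ = ((MD : ℝ) + (n + 1) * M) / (n + 2) := by
        rw [hlim.liminf_eq]
        push_cast
        ring

theorem lom_s1improved_sigma2d {D1 E1 : A1} (hE1 : E1 ≠ C1) (t : ℕ) :
    lom u1 (s1improved C1 D1 E1 t) (sigma2d C1 C2 D2)
      = ((u1 (D1, D2) : ℝ) + (t + 1) * u1 (C1, C2)) / (t + 2) := by
  set p := play (s1improved C1 D1 E1 t) (sigma2d C1 C2 D2)
  have hbefore : ∀ T < t, (p T).1 ≠ C1 := fun T hT => by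
    rwa [play_fst_s1improved, if_pos hT]
  have hfirst : (p t).1 = C1 := by simp [p, play_fst_s1improved]
  have hpay : (fun T => (u1 (p T) : ℝ)) =ᶠ[atTop]
      fun T => if t + 1 + 1 ∣ T + 1 then (u1 (D1, D2) : ℝ) else u1 (C1, C2) := by
    filter_upwards [eventually_gt_atTop t] with T hT
    have hsnd := play_snd_sigma2d_of_lt hbefore hfirst hT
    rw [← Prod.mk.eta (p := p T), hsnd, play_fst_s1improved,
      if_neg hT.not_gt, if_neg hT.ne']
    split_ifs <;> rfl
  have hlim := tendsto_runningMean_congr hpay (tendsto_runningMean_ite_dvd (t + 1) _ _)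
  rw [lom_eq_liminf_runningMean, hlim.liminf_eq]
  push_cast
  ring

end Payoff

/-- If Player 1's strategy `s₁` first plays `C₁` at (1-indexed) stage `t`
against `σ₂ᵈ`, then `υ₁(s₁, σ₂ᵈ) ≤ (M₁(D₂) + t·M₁)/(t+1)`, while the strategy
that first plays `C₁` at stage `t + 1` and afterwards plays `D₁` exactly when
`t + 2` divides the current stage achieves limit-of-means payoff exactly
`(M₁(D₂) + (t+1)·M₁)/(t+2)`, which is strictly larger since `M₁(D₂) < M₁`. -/
theorem delay_first_cooperation_strictly_improves
    {A1 A2 : Type} [Fintype A1] [Fintype A2] [Nonempty A1] [Nonempty A2]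
    [DecidableEq A1]
    (u1 : A1 × A2 → ℚ) (C1 D1 E1 : A1) (C2 D2 : A2) (M1 M1D2 : ℚ)
    (hM1 : M1 = Finset.univ.sup' Finset.univ_nonempty u1)
    (hM1D2 : M1D2 = Finset.univ.sup' Finset.univ_nonempty (fun a1 : A1 => u1 (a1, D2)))
    (hC : u1 (C1, C2) = M1) (hD : u1 (D1, D2) = M1D2) (hlt : M1D2 < M1)
    (hE1 : E1 ≠ C1)
    (t : ℕ) (ht : 1 ≤ t)
    (s1 : List (A1 × A2) → A1)
    (hfirst : (play s1 (sigma2d C1 C2 D2) (t - 1)).1 = C1)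
    (hbefore : ∀ t' < t - 1, (play s1 (sigma2d C1 C2 D2) t').1 ≠ C1) :
    lom u1 s1 (sigma2d C1 C2 D2) ≤ ((M1D2 : ℝ) + t * M1) / (t + 1) ∧
    lom u1 (s1improved C1 D1 E1 t) (sigma2d C1 C2 D2)
      = ((M1D2 : ℝ) + (t + 1) * M1) / (t + 2) ∧
    ((M1D2 : ℝ) + t * M1) / (t + 1) < ((M1D2 : ℝ) + (t + 1) * M1) / (t + 2) := by
  obtain ⟨n, rfl⟩ : ∃ n, t = n + 1 := ⟨t - 1, by omega⟩
  rw [Nat.add_sub_cancel] at hfirst hbefore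
  have hM : ∀ a, u1 a ≤ M1 := fun a => hM1 ▸ le_sup' u1 (mem_univ a)
  have hMD : ∀ a1, u1 (a1, D2) ≤ M1D2 := fun a1 =>
    hM1D2 ▸ le_sup' (fun a1 => u1 (a1, D2)) (mem_univ a1)
  refine ⟨?_, ?_, ?_⟩
  · convert lom_sigma2d_le u1 hM hMD hbefore hfirst using 2 <;> push_cast <;> ring
  · rw [lom_s1improved_sigma2d u1 hE1, hD, hC]
  · have hltR : (M1D2 : ℝ) < M1 := by exact_mod_cast hlt
    rw [div_lt_div_iff₀ (by positivity) (by positivity)]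
    nlinarith
end
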